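/- Localized wavelet coefficient estimates: Let d ≥ 1, η ≥ δ > 0, let Q ⊂ ℝ^d be a cube with center c(Q) and side length ℓ(Q), let f ∈ L¹_loc(ℝ^d), and let z = (w,t) ∈ Z^d and θ : ℝ^d → ℂ with ‖(Sy_z)^{−1}θ‖_{⋆,η,δ} ≤ 1. Then, with constants depending only on d, η, δ: (i) if w ∉ 3Q, |∫_Q f θ| ≤ C ⟨f⟩_{1,Q} ℓ(Q)^d t^η max{t, |w−c(Q)|}^{−(d+η)}; (ii) if w ∉ 3Q and ∫_Q f = 0, |∫_Q f θ| ≤ C ⟨f⟩_{1,Q} ℓ(Q)^{d+δ} t^{η−δ} max{t, |w−c(Q)|}^{−(d+η)}; (iii) if w ∈ Q, |∫_{(3Q)^c} f θ| ≤ C (t/ℓ(Q))^η inf_{u∈Q} Mf(u), where Mf(u) := sup{⨍_B |f| : B a ball containing u} is the Hardy–Littlewood maximal function. -/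

import Mathlib

/-!
After undoing the dilation, the hypothesis on `θ` says that `|θ(x)| ≤ t^η (t + |x - w|)^{-(d+η)}`
and that `θ` is `δ`-Hölder at scales `≤ t` with the same weight.

For `w ∉ 3Q` every point of `Q` lies at distance `≳ max(t, |w - c|)` from `w`, so integrating the
decay bound against `|f|` over `Q` gives (i). If `f` has mean zero on `Q` one may replace `θ` by
`θ - θ(c)`; the Hölder bound (or, at distances beyond `t`, the decay bound) then gains the factor
`(ℓ(Q) / t)^δ`, which is (ii).

For (iii), `(3Q)ᶜ` lies at distance `≥ ℓ(Q)` from any `u ∈ Q`, and is covered by the dyadic annuli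
`2^k ℓ(Q) ≤ |x - u| < 2^{k+1} ℓ(Q)`. On the `k`-th annulus `|θ| ≲ t^η (2^k ℓ(Q))^{-(d+η)}`, while
`∫ |f|` over the ball of radius `2^{k+1} ℓ(Q)` about `u` is at most its volume times `Mf(u)`; the
resulting geometric series sums to `≲ (t / ℓ(Q))^η Mf(u)`.
-/

open MeasureTheory Metric Filter Finset
open scoped ENNReal NNReal Real Topology RealInnerProductSpace

noncomputable section

abbrev Rd (d : ℕ) := EuclideanSpace ℝ (Fin d)

def Sy {d : ℕ} (w : Rd d) (t : ℝ) (φ : Rd d → ℂ) : Rd d → ℂ :=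
  fun x => ((t ^ d)⁻¹ : ℝ) • φ (t⁻¹ • (x - w))

def SyInv {d : ℕ} (w : Rd d) (t : ℝ) (φ : Rd d → ℂ) : Rd d → ℂ :=
  fun x => (t ^ d : ℝ) • φ (w + t • x)

def SyInv2 {d : ℕ} (w : Rd d) (t : ℝ) (ν : Rd d × Rd d → ℂ) : Rd d × Rd d → ℂ :=
  fun p => ((t ^ d) * (t ^ d) : ℝ) • ν (w + t • p.1, w + t • p.2)

def starBound {E : Type*} [NormedAddCommGroup E] (e δ C : ℝ) (φ : E → ℂ) : Prop :=
  (∀ x : E, (1 + ‖x‖) ^ e * ‖φ x‖ ≤ C) ∧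
  ∀ x h : E, 0 < ‖h‖ → ‖h‖ ≤ 1 →
    (1 + ‖x‖) ^ e * ‖φ (x + h) - φ x‖ ≤ C * ‖h‖ ^ δ

def pderiv1 {d : ℕ} (i : Fin d) (f : Rd d → ℂ) : Rd d → ℂ :=
  fun x => fderiv ℝ f x (EuclideanSpace.single i 1)

def mderiv {d : ℕ} (γ : Fin d → ℕ) (f : Rd d → ℂ) : Rd d → ℂ :=
  (List.finRange d).foldr (fun i g => (pderiv1 i)^[γ i] g) f

def pderivP {d : ℕ} (v : Rd d × Rd d) (f : Rd d × Rd d → ℂ) : Rd d × Rd d → ℂ :=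
  fun x => fderiv ℝ f x v

def mderiv2 {d : ℕ} (γ₁ γ₂ : Fin d → ℕ) (f : Rd d × Rd d → ℂ) : Rd d × Rd d → ℂ :=
  (List.finRange d).foldr
    (fun i g => (pderivP ((EuclideanSpace.single i 1 : Rd d), (0 : Rd d)))^[γ₁ i] g)
    ((List.finRange d).foldr
      (fun i g => (pderivP ((0 : Rd d), (EuclideanSpace.single i 1 : Rd d)))^[γ₂ i] g) f)

def mono {d : ℕ} (γ : Fin d → ℕ) (x : Rd d) : ℂ := ∏ i, (x i : ℂ) ^ γ i

def degOf {d : ℕ} (γ : Fin d → ℕ) : ℕ := ∑ i, γ i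

def HasVanishingMoments {d : ℕ} (j : ℕ) (φ : Rd d → ℂ) : Prop :=
  ∀ γ : Fin d → ℕ, degOf γ ≤ j → ∫ x : Rd d, mono γ x * φ x = 0

def IsSchwartzFn {d : ℕ} (f : Rd d → ℂ) : Prop :=
  ∃ Φ : SchwartzMap (Rd d) ℂ, ⇑Φ = f

def paperFT {d : ℕ} (φ : Rd d → ℂ) : Rd d → ℂ :=
  fun ξ => ((2 * Real.pi) ^ (-(d : ℝ) / 2) : ℝ) •
    ∫ x : Rd d, Complex.exp (-(Complex.I * ((inner ℝ x ξ : ℝ) : ℂ))) * φ x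

def fmul {d : ℕ} (m : Rd d → ℂ) (φ : Rd d → ℂ) : Rd d → ℂ :=
  fun x => ((2 * Real.pi) ^ (-(d : ℝ) / 2) : ℝ) •
    ∫ ξ : Rd d, Complex.exp (Complex.I * ((inner ℝ ξ x : ℝ) : ℂ)) * (m ξ * paperFT φ ξ)

def negDeriv {d : ℕ} (γ : Fin d → ℕ) : (Rd d → ℂ) → Rd d → ℂ :=
  fmul (fun ξ => mono γ ξ / (‖ξ‖ : ℂ) ^ (2 * degOf γ))

def fracD {d : ℕ} (σ : ℝ) : (Rd d → ℂ) → Rd d → ℂ :=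
  fmul (fun ξ => ((‖ξ‖ ^ σ : ℝ) : ℂ))

def negDerivY {d : ℕ} (κ : Fin d → ℕ) (ν : Rd d × Rd d → ℂ) : Rd d × Rd d → ℂ :=
  fun p => negDeriv κ (fun y => ν (p.1, y)) p.2

def negDerivX {d : ℕ} (κ : Fin d → ℕ) (ν : Rd d × Rd d → ℂ) : Rd d × Rd d → ℂ :=
  fun p => negDeriv κ (fun x => ν (x, p.2)) p.1

def Admissible {d : ℕ} (φ : Rd d → ℂ) : Prop :=
  ∀ ρ : Rd d, ‖ρ‖ = 1 → ∫ s in Set.Ioi (0 : ℝ), ‖paperFT φ (s • ρ)‖ ^ 2 / s = 1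

def IsMotherWavelet (d D : ℕ) (φ : Rd d → ℂ) : Prop :=
  IsSchwartzFn φ ∧
  HasVanishingMoments (2 * D) φ ∧
  Function.support φ ⊆ closedBall 0 (1 / 2) ∧
  Admissible φ ∧
  ∀ γ : Fin d → ℕ, degOf γ ≤ D →
    HasVanishingMoments D (mderiv γ φ) ∧
    IsSchwartzFn (negDeriv γ φ) ∧ HasVanishingMoments D (negDeriv γ φ)

def memPsi11 (d k : ℕ) (δ C : ℝ) (w : Rd d) (t : ℝ) (ν : Rd d × Rd d → ℂ) : Prop :=
  ContDiff ℝ k ν ∧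
  ∀ γ₁ γ₂ : Fin d → ℕ, degOf γ₁ + degOf γ₂ ≤ k →
    starBound (2 * (d : ℝ) + k) δ (C / t ^ (degOf γ₁ + degOf γ₂))
      (SyInv2 w t (mderiv2 γ₁ γ₂ ν))

def memPsi10 (d k : ℕ) (δ C : ℝ) (w : Rd d) (t : ℝ) (ν : Rd d × Rd d → ℂ) : Prop :=
  memPsi11 d k δ C w t ν ∧
  ∀ x : Rd d, ∀ α : Fin d → ℕ, degOf α ≤ k → ∫ y : Rd d, mono α y * ν (x, y) = 0

def memPsi01 (d k : ℕ) (δ C : ℝ) (w : Rd d) (t : ℝ) (ν : Rd d × Rd d → ℂ) : Prop :=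
  memPsi11 d k δ C w t ν ∧
  ∀ y : Rd d, ∀ α : Fin d → ℕ, degOf α ≤ k → ∫ x : Rd d, mono α x * ν (x, y) = 0

def memPsi1 (d k : ℕ) (δ C : ℝ) (w : Rd d) (t : ℝ) (φ : Rd d → ℂ) : Prop :=
  ContDiff ℝ k φ ∧
  ∀ γ : Fin d → ℕ, degOf γ ≤ k →
    starBound ((d : ℝ) + degOf γ) δ (C / t ^ degOf γ) (SyInv w t (mderiv γ φ))

def cube {d : ℕ} (c : Rd d) (r : ℝ) : Set (Rd d) := {x | ∀ i, |x i - c i| ≤ r}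

def IsBMO {d : ℕ} (b : Rd d → ℂ) : Prop :=
  LocallyIntegrable b volume ∧
  ∃ M : ℝ, ∀ (c : Rd d) (r : ℝ), 0 < r →
    ⨍ x in cube c r, ‖b x - ⨍ y in cube c r, b y‖ ≤ M

def multiIdxLE (d N : ℕ) : Finset (Fin d → ℕ) :=
  (Fintype.piFinset fun _ : Fin d => Finset.range (N + 1)).filter fun κ => degOf κ ≤ N

def multiIdxEq (d N : ℕ) : Finset (Fin d → ℕ) :=
  (Fintype.piFinset fun _ : Fin d => Finset.range (N + 1)).filter fun κ => degOf κ = N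

def expOf (a : ℝ) : ℝ≥0∞ := if a = 0 then ∞ else ENNReal.ofReal a⁻¹

def truncMono {d : ℕ} (γ : Fin d → ℕ) (χ : Rd d → ℂ) (R : ℝ) : Rd d → ℂ :=
  fun x => mono γ x * χ (R⁻¹ • x)

lemma div_rpow_le_mul_div_rpow {a A B K e : ℝ} (ha : 0 ≤ a) (hA : 0 < A) (hK : 0 < K)
    (he : 0 ≤ e) (h : A ≤ K * B) : a / B ^ e ≤ K ^ e * (a / A ^ e) := by
  calc a / B ^ e ≤ a / (A / K) ^ e := by
        gcongr
        rwa [div_le_iff₀' hK]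
    _ = K ^ e * (a / A ^ e) := by rw [Real.div_rpow hA.le hK.le]; field_simp

section Cube

variable {d : ℕ} {c w x y : Rd d} {r t : ℝ}

lemma cube_eq_preimage_closedBall (c : Rd d) (hr : 0 ≤ r) :
    cube c r = WithLp.ofLp ⁻¹' closedBall (WithLp.ofLp c) r := by
  ext x
  simp [cube, dist_pi_le_iff hr, Real.dist_eq]

lemma norm_sub_le_of_mem_cube (hr : 0 ≤ r) (hx : x ∈ cube c r) : ‖x - c‖ ≤ √d * r := by
  rw [EuclideanSpace.norm_eq, ← Real.sqrt_sq hr, ← Real.sqrt_mul (Nat.cast_nonneg d)]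
  refine Real.sqrt_le_sqrt ?_
  calc ∑ i, ‖(x - c) i‖ ^ 2 ≤ ∑ _i : Fin d, r ^ 2 := by
        gcongr with i
        simpa [abs_le] using hx i
    _ = d * r ^ 2 := by simp

lemma isCompact_cube (c : Rd d) (hr : 0 ≤ r) : IsCompact (cube c r) := by
  refine (isCompact_closedBall c (√d * r)).of_isClosed_subset ?_
    fun x hx => mem_closedBall_iff_norm.mpr (norm_sub_le_of_mem_cube hr hx)
  rw [cube_eq_preimage_closedBall c hr]
  exact isClosed_closedBall.preimage (PiLp.continuous_ofLp 2 _)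

lemma measureReal_cube (c : Rd d) (hr : 0 ≤ r) : volume.real (cube c r) = (2 * r) ^ d := by
  rw [measureReal_def, cube_eq_preimage_closedBall c hr,
    (PiLp.volume_preserving_ofLp (Fin d)).measure_preimage
      measurableSet_closedBall.nullMeasurableSet,
    Real.volume_pi_closedBall _ hr, Fintype.card_fin, ENNReal.toReal_ofReal (by positivity)]

lemma two_mul_le_norm_sub_of_mem_cube_of_notMem (hx : x ∈ cube c r)
    (hy : y ∉ cube c (3 * r)) : 2 * r ≤ ‖y - x‖ := by
  obtain ⟨i, hi⟩ : ∃ i, 3 * r < |y i - c i| := by simpa [cube] using hy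
  have hxi := hx i
  calc 2 * r ≤ |y i - x i| := by
        rw [abs_le] at hxi
        cases abs_cases (y i - c i) <;> cases abs_cases (y i - x i) <;> linarith
    _ ≤ ‖y - x‖ := by simpa using PiLp.norm_apply_le (y - x) i

lemma max_le_mul_add_norm_sub (ht : 0 ≤ t) (hr : 0 ≤ r) (hw : w ∉ cube c (3 * r))
    (hx : x ∈ cube c r) : max t ‖w - c‖ ≤ (1 + √d / 2) * (t + ‖x - w‖) := by
  have hxw := two_mul_le_norm_sub_of_mem_cube_of_notMem hx hw
  have hxc := norm_sub_le_of_mem_cube hr hx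
  have hwc : ‖w - c‖ ≤ ‖x - w‖ + ‖x - c‖ := by
    simpa [norm_sub_rev x w] using norm_sub_le_norm_sub_add_norm_sub w x c
  rw [norm_sub_rev] at hxw
  refine max_le ?_ ?_ <;> nlinarith [Real.sqrt_nonneg d, norm_nonneg (x - w)]

lemma norm_sub_le_one_add_sqrt_mul (hr : 0 ≤ r) (hw : w ∈ cube c r) (hy : y ∈ cube c r)
    (hx : x ∉ cube c (3 * r)) : ‖x - y‖ ≤ (1 + √d) * ‖x - w‖ := by
  have hxw := two_mul_le_norm_sub_of_mem_cube_of_notMem hw hx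
  have hwc := norm_sub_le_of_mem_cube hr hw
  have hyc := norm_sub_le_of_mem_cube hr hy
  have htri : ‖x - y‖ ≤ ‖x - w‖ + (‖w - c‖ + ‖y - c‖) := by
    calc ‖x - y‖ ≤ ‖x - w‖ + ‖w - y‖ := norm_sub_le_norm_sub_add_norm_sub x w y
      _ ≤ ‖x - w‖ + (‖w - c‖ + ‖y - c‖) := by
        gcongr; simpa [norm_sub_rev y c] using norm_sub_le_norm_sub_add_norm_sub w c y
  nlinarith [Real.sqrt_nonneg d]

end Cube

section StarBound

variable {E : Type*} [NormedAddCommGroup E] {e δ C : ℝ} {φ : E → ℂ}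

lemma starBound.norm_le (h : starBound e δ C φ) (x : E) : ‖φ x‖ ≤ C / (1 + ‖x‖) ^ e := by
  rw [le_div_iff₀' (by positivity)]
  exact h.1 x

lemma starBound.norm_sub_le (h : starBound e δ C φ) (x : E) {v : E} (hv : ‖v‖ ≤ 1) :
    ‖φ (x + v) - φ x‖ ≤ C * ‖v‖ ^ δ / (1 + ‖x‖) ^ e := by
  rcases (norm_nonneg v).eq_or_lt with hv0 | hv0
  · rw [← hv0, norm_eq_zero.mp hv0.symm, add_zero, sub_self, norm_zero]
    have hC : 0 ≤ C := (by positivity : 0 ≤ (1 + ‖x‖) ^ e * ‖φ x‖).trans (h.1 x)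
    exact div_nonneg (mul_nonneg hC (Real.rpow_nonneg le_rfl δ)) (by positivity)
  rw [le_div_iff₀' (by positivity)]
  exact h.2 x v hv0 hv

lemma starBound.continuous (hδ : 0 < δ) (h : starBound e δ C φ) : Continuous φ := by
  refine continuous_iff_continuousAt.mpr fun x => ?_
  rw [ContinuousAt, tendsto_iff_norm_sub_tendsto_zero]
  have hv : Tendsto (fun y => C * ‖y - x‖ ^ δ / (1 + ‖x‖) ^ e) (𝓝 x) (𝓝 0) := by
    have : Tendsto (fun y => ‖y - x‖) (𝓝 x) (𝓝 0) := tendsto_iff_norm_sub_tendsto_zero.mp tendsto_id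
    simpa [Real.zero_rpow hδ.ne'] using
      ((this.rpow_const (Or.inr hδ.le)).const_mul C).div_const ((1 + ‖x‖) ^ e)
  refine squeeze_zero' (Eventually.of_forall fun _ => norm_nonneg _) ?_ hv
  filter_upwards [closedBall_mem_nhds x one_pos] with y hy
  simpa using h.norm_sub_le x (v := y - x) (by rwa [← dist_eq_norm])

end StarBound

section Rescaling

variable {d : ℕ} {η δ t : ℝ} {w : Rd d} {θ : Rd d → ℂ}

lemma eq_inv_pow_smul_syInv (w : Rd d) (θ : Rd d → ℂ) (ht : t ≠ 0) (y : Rd d) :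
    θ y = ((t ^ d)⁻¹ : ℝ) • SyInv w t θ (t⁻¹ • (y - w)) := by
  simp [SyInv, smul_smul, ht]

lemma norm_inv_smul_of_pos (ht : 0 < t) (v : Rd d) : ‖t⁻¹ • v‖ = ‖v‖ / t := by
  rw [norm_smul, Real.norm_of_nonneg (inv_nonneg.mpr ht.le), inv_mul_eq_div]

lemma inv_pow_div_one_add_div_rpow (ht : 0 < t) {s : ℝ} (hs : 0 ≤ s) :
    (t ^ d)⁻¹ / (1 + s / t) ^ ((d : ℝ) + η) = t ^ η / (t + s) ^ ((d : ℝ) + η) := by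
  have hts : 1 + s / t = (t + s) / t := by field_simp
  rw [hts, Real.div_rpow (by linarith) ht.le, Real.rpow_add ht, Real.rpow_natCast]
  field_simp

lemma norm_le_of_starBound_syInv (ht : 0 < t) (hθ : starBound ((d : ℝ) + η) δ 1 (SyInv w t θ))
    (y : Rd d) : ‖θ y‖ ≤ t ^ η / (t + ‖y - w‖) ^ ((d : ℝ) + η) := by
  have h := starBound.norm_le hθ (t⁻¹ • (y - w))
  rw [norm_inv_smul_of_pos ht] at h
  calc ‖θ y‖ = (t ^ d)⁻¹ * ‖SyInv w t θ (t⁻¹ • (y - w))‖ := by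
        rw [eq_inv_pow_smul_syInv w θ ht.ne' y, norm_smul, Real.norm_of_nonneg (by positivity)]
    _ ≤ (t ^ d)⁻¹ * (1 / (1 + ‖y - w‖ / t) ^ ((d : ℝ) + η)) := by gcongr
    _ = t ^ η / (t + ‖y - w‖) ^ ((d : ℝ) + η) := by
        rw [mul_one_div, inv_pow_div_one_add_div_rpow ht (norm_nonneg _)]

lemma norm_sub_le_of_starBound_syInv (ht : 0 < t)
    (hθ : starBound ((d : ℝ) + η) δ 1 (SyInv w t θ)) {a y : Rd d} (hy : ‖y - a‖ ≤ t) :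
    ‖θ y - θ a‖ ≤ (‖y - a‖ / t) ^ δ * (t ^ η / (t + ‖a - w‖) ^ ((d : ℝ) + η)) := by
  have hv : ‖t⁻¹ • (y - a)‖ ≤ 1 := by
    rw [norm_inv_smul_of_pos ht, div_le_one ht]; exact hy
  have h := starBound.norm_sub_le hθ (t⁻¹ • (a - w)) hv
  rw [← smul_add, sub_add_sub_cancel', norm_inv_smul_of_pos ht, norm_inv_smul_of_pos ht] at h
  calc ‖θ y - θ a‖
      = (t ^ d)⁻¹ * ‖SyInv w t θ (t⁻¹ • (y - w)) - SyInv w t θ (t⁻¹ • (a - w))‖ := by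
        rw [eq_inv_pow_smul_syInv w θ ht.ne' y, eq_inv_pow_smul_syInv w θ ht.ne' a, ← smul_sub,
          norm_smul, Real.norm_of_nonneg (by positivity)]
    _ ≤ (t ^ d)⁻¹ * (1 * (‖y - a‖ / t) ^ δ / (1 + ‖a - w‖ / t) ^ ((d : ℝ) + η)) := by gcongr
    _ = (‖y - a‖ / t) ^ δ * (t ^ η / (t + ‖a - w‖) ^ ((d : ℝ) + η)) := by
        rw [← inv_pow_div_one_add_div_rpow ht (norm_nonneg _)]
        ring

lemma continuous_of_starBound_syInv (hδ : 0 < δ) (ht : 0 < t)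
    (hθ : starBound ((d : ℝ) + η) δ 1 (SyInv w t θ)) : Continuous θ := by
  have hψ := starBound.continuous hδ hθ
  rw [funext (eq_inv_pow_smul_syInv w θ ht.ne')]
  fun_prop

end Rescaling

section Averages

variable {X F : Type*} [MeasurableSpace X] {μ : Measure X} [NormedAddCommGroup F] {f : X → F}
  {M : ℝ}

lemma setAverage_norm_nonneg (s : Set X) : 0 ≤ ⨍ x in s, ‖f x‖ ∂μ := by
  rw [setAverage_eq]
  exact smul_nonneg (inv_nonneg.mpr measureReal_nonneg) (integral_nonneg fun _ => norm_nonneg _)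

lemma lintegral_ball_le_of_setAverage_le [PseudoMetricSpace X] [ProperSpace X]
    [IsFiniteMeasureOnCompacts μ] (hf : LocallyIntegrable f μ) {u : X} {ρ : ℝ}
    (hM : ⨍ x in ball u ρ, ‖f x‖ ∂μ ≤ M) :
    ∫⁻ x in ball u ρ, ‖f x‖ₑ ∂μ ≤ ENNReal.ofReal (M * μ.real (ball u ρ)) := by
  rw [← ofReal_integral_norm_eq_lintegral_enorm
    ((hf.integrableOn_isCompact (isCompact_closedBall u ρ)).mono_set ball_subset_closedBall),
    ← measure_smul_setAverage _ measure_ball_lt_top.ne, smul_eq_mul, mul_comm]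
  exact ENNReal.ofReal_le_ofReal (mul_le_mul_of_nonneg_right hM measureReal_nonneg)

lemma norm_setIntegral_le_setAverage_mul {G : Type*} [NormedAddCommGroup G] [NormedSpace ℝ G]
    {s : Set X} (hs : MeasurableSet s) (hμs : μ s ≠ ∞) (hf : IntegrableOn f s μ) {g : X → G}
    {B : ℝ} (hg : ∀ x ∈ s, ‖g x‖ ≤ ‖f x‖ * B) :
    ‖∫ x in s, g x ∂μ‖ ≤ (⨍ x in s, ‖f x‖ ∂μ) * μ.real s * B := by
  calc ‖∫ x in s, g x ∂μ‖ ≤ ∫ x in s, ‖f x‖ * B ∂μ :=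
        norm_integral_le_of_norm_le (hf.norm.mul_const B) (ae_restrict_of_forall_mem hs hg)
    _ = (⨍ x in s, ‖f x‖ ∂μ) * μ.real s * B := by
        rw [integral_mul_const, ← measure_smul_setAverage _ hμs, smul_eq_mul, mul_comm (μ.real s)]

end Averages

section MaximalTail

open Module

variable {E F : Type*} [NormedAddCommGroup E] {u : E}

lemma subset_iUnion_dyadic_annulus {R : ℝ} (hR : 0 < R) :
    {x : E | R ≤ ‖x - u‖} ⊆
      ⋃ k : ℕ, {x | 2 ^ k * R ≤ ‖x - u‖ ∧ ‖x - u‖ < 2 * (2 ^ k * R)} := by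
  intro x hx
  obtain ⟨k, hk, hk'⟩ := exists_nat_pow_near ((one_le_div hR).mpr hx) one_lt_two
  refine Set.mem_iUnion.mpr ⟨k, ?_, ?_⟩
  · rwa [le_div_iff₀ hR] at hk
  · rwa [pow_succ', div_lt_iff₀ hR, mul_assoc] at hk'

variable [NormedSpace ℝ E] [FiniteDimensional ℝ E] [MeasurableSpace E] [BorelSpace E]
  {μ : Measure E} [μ.IsAddHaarMeasure] [NormedAddCommGroup F] {f : E → F} {M η : ℝ}

lemma addHaar_real_ball_of_pos (u : E) {ρ : ℝ} (hρ : 0 < ρ) :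
    μ.real (ball u ρ) = ρ ^ finrank ℝ E * μ.real (ball 0 1) := by
  rw [measureReal_def, Measure.addHaar_ball_of_pos μ u hρ, ENNReal.toReal_mul,
    ENNReal.toReal_ofReal (by positivity), measureReal_def]

lemma lintegral_annulus_le (hf : LocallyIntegrable f μ)
    (hM : ∀ ρ, 0 < ρ → ⨍ x in ball u ρ, ‖f x‖ ∂μ ≤ M) (hη : 0 ≤ η) {ρ : ℝ} (hρ : 0 < ρ) :
    ∫⁻ x in {x | ρ ≤ ‖x - u‖ ∧ ‖x - u‖ < 2 * ρ},
        ‖f x‖ₑ * ENNReal.ofReal (‖x - u‖ ^ (-((finrank ℝ E : ℝ) + η))) ∂μ ≤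
      ENNReal.ofReal (2 ^ finrank ℝ E * μ.real (ball 0 1) * M * ρ ^ (-η)) := by
  set n := finrank ℝ E
  set A := {x | ρ ≤ ‖x - u‖ ∧ ‖x - u‖ < 2 * ρ}
  have hdist : Measurable fun x : E => ‖x - u‖ := by fun_prop
  have hA : MeasurableSet A :=
    (measurableSet_le measurable_const hdist).inter (measurableSet_lt hdist measurable_const)
  have hAball : A ⊆ ball u (2 * ρ) := fun x hx => mem_ball_iff_norm.mpr hx.2
  have hweight : ∀ x ∈ A, ‖x - u‖ ^ (-((n : ℝ) + η)) ≤ ρ ^ (-((n : ℝ) + η)) := fun x hx =>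
    Real.rpow_le_rpow_of_nonpos hρ hx.1 (by linarith [n.cast_nonneg (α := ℝ)])
  have hpow : (2 * ρ) ^ n * ρ ^ (-((n : ℝ) + η)) = 2 ^ n * ρ ^ (-η) := by
    rw [mul_pow, mul_assoc, ← Real.rpow_natCast ρ, ← Real.rpow_add hρ]
    ring_nf
  calc ∫⁻ x in A, ‖f x‖ₑ * ENNReal.ofReal (‖x - u‖ ^ (-((n : ℝ) + η))) ∂μ
      ≤ ∫⁻ x in A, ‖f x‖ₑ * ENNReal.ofReal (ρ ^ (-((n : ℝ) + η))) ∂μ :=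
        setLIntegral_mono' hA fun x hx => by gcongr _ * ENNReal.ofReal ?_; exact hweight x hx
    _ = (∫⁻ x in A, ‖f x‖ₑ ∂μ) * ENNReal.ofReal (ρ ^ (-((n : ℝ) + η))) :=
        lintegral_mul_const' _ _ ENNReal.ofReal_ne_top
    _ ≤ ENNReal.ofReal (M * μ.real (ball u (2 * ρ))) * ENNReal.ofReal (ρ ^ (-((n : ℝ) + η))) := by
        gcongr
        exact (lintegral_mono_set hAball).trans
          (lintegral_ball_le_of_setAverage_le hf (hM _ (by positivity)))
    _ = ENNReal.ofReal (2 ^ n * μ.real (ball 0 1) * M * ρ ^ (-η)) := by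
        rw [← ENNReal.ofReal_mul' (by positivity), addHaar_real_ball_of_pos u (by positivity)]
        congr 1
        linear_combination M * μ.real (ball 0 1) * hpow

lemma lintegral_tail_le (hf : LocallyIntegrable f μ)
    (hM : ∀ ρ, 0 < ρ → ⨍ x in ball u ρ, ‖f x‖ ∂μ ≤ M) (hη : 0 < η) {R : ℝ} (hR : 0 < R) :
    ∫⁻ x in {x | R ≤ ‖x - u‖},
        ‖f x‖ₑ * ENNReal.ofReal (‖x - u‖ ^ (-((finrank ℝ E : ℝ) + η))) ∂μ ≤
      ENNReal.ofReal (2 ^ finrank ℝ E * μ.real (ball 0 1) / (1 - 2 ^ (-η)) * M * R ^ (-η)) := by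
  set a := 2 ^ finrank ℝ E * μ.real (ball 0 1) * M * R ^ (-η)
  have hM0 : 0 ≤ M := (setAverage_norm_nonneg _).trans (hM 1 one_pos)
  have ha : 0 ≤ a := by positivity
  have hq0 : (0 : ℝ) ≤ 2 ^ (-η) := by positivity
  have hq1 : (2 : ℝ) ^ (-η) < 1 := Real.rpow_lt_one_of_one_lt_of_neg one_lt_two (by linarith)
  have hterm : ∀ k : ℕ, 2 ^ finrank ℝ E * μ.real (ball 0 1) * M * (2 ^ k * R) ^ (-η) =
      a * (2 ^ (-η)) ^ k := fun k => by
    rw [Real.mul_rpow (by positivity) hR.le, ← Real.rpow_pow_comm zero_le_two]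
    ring
  calc _ ≤ ∑' k : ℕ, ∫⁻ x in {x | 2 ^ k * R ≤ ‖x - u‖ ∧ ‖x - u‖ < 2 * (2 ^ k * R)},
          ‖f x‖ₑ * ENNReal.ofReal (‖x - u‖ ^ (-((finrank ℝ E : ℝ) + η))) ∂μ :=
        (lintegral_mono_set (subset_iUnion_dyadic_annulus hR)).trans (lintegral_iUnion_le _ _)
    _ ≤ ∑' k : ℕ, ENNReal.ofReal (a * (2 ^ (-η)) ^ k) := ENNReal.tsum_le_tsum fun k => by
        rw [← hterm]; exact lintegral_annulus_le hf hM hη.le (by positivity)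
    _ = ENNReal.ofReal (a * (1 - 2 ^ (-η))⁻¹) := by
        rw [← ENNReal.ofReal_tsum_of_nonneg (fun k => by positivity)
          ((summable_geometric_of_lt_one hq0 hq1).mul_left a), tsum_mul_left,
          tsum_geometric_of_lt_one hq0 hq1]
    _ = _ := by congr 1; ring

end MaximalTail

section WaveletCoefficients

variable {d : ℕ} {η δ t r C M : ℝ} {c u w x : Rd d} {f θ : Rd d → ℂ}

lemma norm_le_of_mem_cube_of_notMem (hη : 0 ≤ η) (ht : 0 < t) (hr : 0 ≤ r)
    (hθ : starBound ((d : ℝ) + η) δ 1 (SyInv w t θ)) (hw : w ∉ cube c (3 * r))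
    (hx : x ∈ cube c r) :
    ‖θ x‖ ≤ (1 + √d / 2) ^ ((d : ℝ) + η) * (t ^ η / max t ‖w - c‖ ^ ((d : ℝ) + η)) :=
  (norm_le_of_starBound_syInv ht hθ x).trans <| div_rpow_le_mul_div_rpow (by positivity)
    (lt_max_of_lt_left ht) (by positivity) (by positivity) (max_le_mul_add_norm_sub ht.le hr hw hx)

lemma norm_sub_center_le_of_mem_cube_of_notMem (hη : 0 ≤ η) (hδ : 0 ≤ δ) (ht : 0 < t)
    (hr : 0 ≤ r) (hθ : starBound ((d : ℝ) + η) δ 1 (SyInv w t θ)) (hw : w ∉ cube c (3 * r))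
    (hx : x ∈ cube c r) :
    ‖θ x - θ c‖ ≤ 2 * (1 + √d / 2) ^ ((d : ℝ) + η) *
      ((‖x - c‖ / t) ^ δ * (t ^ η / max t ‖w - c‖ ^ ((d : ℝ) + η))) := by
  set K := (1 + √d / 2) ^ ((d : ℝ) + η)
  set D := t ^ η / max t ‖w - c‖ ^ ((d : ℝ) + η)
  have hc : c ∈ cube c r := fun i => by simpa using hr
  have hD : 0 ≤ D := by positivity
  rcases le_or_gt ‖x - c‖ t with hxc | hxc
  · have hHolder : ‖θ x - θ c‖ ≤ (‖x - c‖ / t) ^ δ * (K * D) :=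
      (norm_sub_le_of_starBound_syInv ht hθ hxc).trans <| by
        gcongr
        exact div_rpow_le_mul_div_rpow (by positivity) (lt_max_of_lt_left ht) (by positivity)
          (by positivity) (max_le_mul_add_norm_sub ht.le hr hw hc)
    have : 0 ≤ (‖x - c‖ / t) ^ δ * (K * D) := by positivity
    nlinarith
  · have hpow : 1 ≤ (‖x - c‖ / t) ^ δ := Real.one_le_rpow ((one_le_div ht).mpr hxc.le) hδ
    calc ‖θ x - θ c‖ ≤ ‖θ x‖ + ‖θ c‖ := norm_sub_le _ _
      _ ≤ K * D + K * D := add_le_add (norm_le_of_mem_cube_of_notMem hη ht hr hθ hw hx)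
          (norm_le_of_mem_cube_of_notMem hη ht hr hθ hw hc)
      _ ≤ 2 * K * ((‖x - c‖ / t) ^ δ * D) := by
          nlinarith [mul_nonneg (by positivity : (0 : ℝ) ≤ K) hD]

lemma norm_le_of_notMem_cube (hη : 0 ≤ η) (ht : 0 < t) (hr : 0 < r)
    (hθ : starBound ((d : ℝ) + η) δ 1 (SyInv w t θ)) (hw : w ∈ cube c r) (hu : u ∈ cube c r)
    (hx : x ∉ cube c (3 * r)) :
    ‖θ x‖ ≤ (1 + √d) ^ ((d : ℝ) + η) * t ^ η * ‖x - u‖ ^ (-((d : ℝ) + η)) := by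
  have hxw : 0 < ‖x - w‖ := by
    linarith [two_mul_le_norm_sub_of_mem_cube_of_notMem hw hx]
  have hxu : 0 < ‖x - u‖ := by
    linarith [two_mul_le_norm_sub_of_mem_cube_of_notMem hu hx]
  calc ‖θ x‖ ≤ t ^ η / (t + ‖x - w‖) ^ ((d : ℝ) + η) := norm_le_of_starBound_syInv ht hθ x
    _ ≤ t ^ η / ‖x - w‖ ^ ((d : ℝ) + η) := by gcongr; linarith
    _ ≤ (1 + √d) ^ ((d : ℝ) + η) * (t ^ η / ‖x - u‖ ^ ((d : ℝ) + η)) :=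
        div_rpow_le_mul_div_rpow (by positivity) hxu (by positivity) (by positivity)
          (norm_sub_le_one_add_sqrt_mul hr.le hw hu hx)
    _ = _ := by rw [Real.rpow_neg hxu.le]; ring

lemma norm_setIntegral_cube_le (hC : (1 + √d / 2) ^ ((d : ℝ) + η) ≤ C) (hη : 0 ≤ η)
    (ht : 0 < t) (hr : 0 ≤ r) (hf : LocallyIntegrable f volume)
    (hθ : starBound ((d : ℝ) + η) δ 1 (SyInv w t θ)) (hw : w ∉ cube c (3 * r)) :
    ‖∫ x in cube c r, f x * θ x‖ ≤
      C * (⨍ x in cube c r, ‖f x‖) * (2 * r) ^ (d : ℝ) * t ^ η /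
        max t ‖w - c‖ ^ ((d : ℝ) + η) := by
  have hbound : ∀ x ∈ cube c r, ‖f x * θ x‖ ≤ ‖f x‖ *
      ((1 + √d / 2) ^ ((d : ℝ) + η) * (t ^ η / max t ‖w - c‖ ^ ((d : ℝ) + η))) :=
    fun x hx => (norm_mul _ _).trans_le <|
      mul_le_mul_of_nonneg_left (norm_le_of_mem_cube_of_notMem hη ht hr hθ hw hx) (norm_nonneg _)
  have havg := setAverage_norm_nonneg (μ := volume) (f := f) (cube c r)
  calc ‖∫ x in cube c r, f x * θ x‖
      ≤ (⨍ x in cube c r, ‖f x‖) * volume.real (cube c r) *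
          ((1 + √d / 2) ^ ((d : ℝ) + η) * (t ^ η / max t ‖w - c‖ ^ ((d : ℝ) + η))) :=
        norm_setIntegral_le_setAverage_mul (isCompact_cube c hr).measurableSet
          (isCompact_cube c hr).measure_ne_top (hf.integrableOn_isCompact (isCompact_cube c hr))
          hbound
    _ = (1 + √d / 2) ^ ((d : ℝ) + η) * (⨍ x in cube c r, ‖f x‖) * (2 * r) ^ (d : ℝ) * t ^ η /
          max t ‖w - c‖ ^ ((d : ℝ) + η) := by
        rw [measureReal_cube c hr, Real.rpow_natCast]; ring
    _ ≤ _ := by gcongr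

lemma norm_setIntegral_cube_le_of_integral_eq_zero
    (hC : 2 * (1 + √d / 2) ^ ((d : ℝ) + η) * (√d / 2) ^ δ ≤ C) (hη : 0 ≤ η) (hδ : 0 < δ)
    (ht : 0 < t) (hr : 0 < r) (hf : LocallyIntegrable f volume)
    (hθ : starBound ((d : ℝ) + η) δ 1 (SyInv w t θ)) (hw : w ∉ cube c (3 * r))
    (hzero : ∫ x in cube c r, f x = 0) :
    ‖∫ x in cube c r, f x * θ x‖ ≤
      C * (⨍ x in cube c r, ‖f x‖) * (2 * r) ^ ((d : ℝ) + δ) * t ^ (η - δ) /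
        max t ‖w - c‖ ^ ((d : ℝ) + η) := by
  set K := (1 + √d / 2) ^ ((d : ℝ) + η)
  set D := t ^ η / max t ‖w - c‖ ^ ((d : ℝ) + η)
  have hQ := isCompact_cube c hr.le
  have hfQ : IntegrableOn f (cube c r) := hf.integrableOn_isCompact hQ
  have hfθQ : IntegrableOn (fun x => f x * θ x) (cube c r) :=
    hfQ.mul_continuousOn (continuous_of_starBound_syInv hδ ht hθ).continuousOn hQ
  have hcancel : ∫ x in cube c r, f x * θ x = ∫ x in cube c r, f x * (θ x - θ c) := by
    simp_rw [mul_sub]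
    rw [integral_sub hfθQ (hfQ.mul_const _), integral_mul_const, hzero, zero_mul, sub_zero]
  have hbound : ∀ x ∈ cube c r, ‖f x * (θ x - θ c)‖ ≤ ‖f x‖ * (2 * K * ((√d * r / t) ^ δ * D)) := by
    intro x hx
    rw [norm_mul]
    gcongr
    refine (norm_sub_center_le_of_mem_cube_of_notMem hη hδ.le ht hr.le hθ hw hx).trans ?_
    gcongr
    exact norm_sub_le_of_mem_cube hr.le hx
  have hscale : (√d * r / t) ^ δ * D = (√d / 2) ^ δ * ((2 * r) ^ δ * t ^ (η - δ) /
      max t ‖w - c‖ ^ ((d : ℝ) + η)) := by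
    rw [show √d * r / t = √d / 2 * (2 * r) / t by ring, Real.div_rpow (by positivity) ht.le,
      Real.mul_rpow (by positivity) (by positivity), Real.rpow_sub ht]
    ring
  have havg := setAverage_norm_nonneg (μ := volume) (f := f) (cube c r)
  calc ‖∫ x in cube c r, f x * θ x‖
      ≤ (⨍ x in cube c r, ‖f x‖) * volume.real (cube c r) * (2 * K * ((√d * r / t) ^ δ * D)) := by
        rw [hcancel]
        exact norm_setIntegral_le_setAverage_mul hQ.measurableSet hQ.measure_ne_top hfQ hbound
    _ = 2 * K * (√d / 2) ^ δ * (⨍ x in cube c r, ‖f x‖) * (2 * r) ^ ((d : ℝ) + δ) *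
          t ^ (η - δ) / max t ‖w - c‖ ^ ((d : ℝ) + η) := by
        rw [measureReal_cube c hr.le, hscale, Real.rpow_add (by positivity : (0 : ℝ) < 2 * r),
          Real.rpow_natCast]
        ring
    _ ≤ _ := by gcongr

lemma norm_setIntegral_compl_cube_le
    (hC : (1 + √d) ^ ((d : ℝ) + η) *
      (2 ^ d * volume.real (ball (0 : Rd d) 1) / (1 - 2 ^ (-η))) ≤ C)
    (hη : 0 < η) (ht : 0 < t) (hr : 0 < r) (hf : LocallyIntegrable f volume)
    (hθ : starBound ((d : ℝ) + η) δ 1 (SyInv w t θ)) (hw : w ∈ cube c r) (hu : u ∈ cube c r)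
    (hM : ∀ (c' : Rd d) (r' : ℝ), 0 < r' → u ∈ ball c' r' → (⨍ x in ball c' r', ‖f x‖) ≤ M) :
    ‖∫ x in (cube c (3 * r))ᶜ, f x * θ x‖ ≤ C * (t / (2 * r)) ^ η * M := by
  set B := (1 + √d) ^ ((d : ℝ) + η) * t ^ η
  set A := 2 ^ d * volume.real (ball (0 : Rd d) 1) / (1 - 2 ^ (-η))
  have hMu : ∀ ρ, 0 < ρ → ⨍ x in ball u ρ, ‖f x‖ ≤ M := fun ρ hρ => hM u ρ hρ (mem_ball_self hρ)
  have hM0 : 0 ≤ M := (setAverage_norm_nonneg _).trans (hMu 1 one_pos)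
  have hA : 0 ≤ A := div_nonneg (by positivity) (sub_nonneg.mpr
    (Real.rpow_le_one_of_one_le_of_nonpos one_le_two (by linarith)))
  have hS : MeasurableSet (cube c (3 * r))ᶜ :=
    (isCompact_cube c (by positivity)).measurableSet.compl
  have hpt : ∀ x ∈ (cube c (3 * r))ᶜ, ‖f x * θ x‖ₑ ≤
      ENNReal.ofReal B * (‖f x‖ₑ * ENNReal.ofReal (‖x - u‖ ^ (-((d : ℝ) + η)))) := fun x hx => by
    rw [enorm_mul, mul_left_comm, ← ENNReal.ofReal_mul (by positivity)]
    gcongr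
    rw [← ofReal_norm]
    exact ENNReal.ofReal_le_ofReal (norm_le_of_notMem_cube hη.le ht hr hθ hw hu hx)
  have htail := lintegral_tail_le (μ := volume) hf hMu hη (by positivity : 0 < 2 * r)
  rw [finrank_euclideanSpace_fin] at htail
  have hlint : ‖∫ x in (cube c (3 * r))ᶜ, f x * θ x‖ₑ ≤
      ENNReal.ofReal (B * (A * M * (2 * r) ^ (-η))) :=
    calc _ ≤ ∫⁻ x in (cube c (3 * r))ᶜ, ‖f x * θ x‖ₑ := enorm_integral_le_lintegral_enorm _
      _ ≤ ∫⁻ x in (cube c (3 * r))ᶜ,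
            ENNReal.ofReal B * (‖f x‖ₑ * ENNReal.ofReal (‖x - u‖ ^ (-((d : ℝ) + η)))) :=
          setLIntegral_mono' hS hpt
      _ = ENNReal.ofReal B * ∫⁻ x in (cube c (3 * r))ᶜ,
            ‖f x‖ₑ * ENNReal.ofReal (‖x - u‖ ^ (-((d : ℝ) + η))) :=
          lintegral_const_mul' _ _ ENNReal.ofReal_ne_top
      _ ≤ ENNReal.ofReal B * ENNReal.ofReal (A * M * (2 * r) ^ (-η)) := by
          gcongr
          exact (lintegral_mono_set fun x hx =>
            two_mul_le_norm_sub_of_mem_cube_of_notMem hu hx).trans htail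
      _ = _ := (ENNReal.ofReal_mul (by positivity)).symm
  rw [← ofReal_norm, ENNReal.ofReal_le_ofReal_iff (by positivity)] at hlint
  calc _ ≤ B * (A * M * (2 * r) ^ (-η)) := hlint
    _ = (1 + √d) ^ ((d : ℝ) + η) * A * (t / (2 * r)) ^ η * M := by
        rw [Real.div_rpow ht.le (by positivity), Real.rpow_neg (by positivity)]
        ring
    _ ≤ _ := by gcongr

end WaveletCoefficients

theorem localized_wavelet_coefficient_estimates_general
    (d : ℕ) (η δ : ℝ) (hδ : 0 < δ) (hηδ : δ ≤ η) :
    ∃ C : ℝ, 0 < C ∧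
      ∀ (c : Rd d) (r : ℝ), 0 < r →
      ∀ f : Rd d → ℂ, LocallyIntegrable f volume →
      ∀ (w : Rd d) (t : ℝ), 0 < t →
      ∀ θ : Rd d → ℂ, starBound ((d : ℝ) + η) δ 1 (SyInv w t θ) →
        -- (i)
        (w ∉ cube c (3 * r) →
          ‖∫ x in cube c r, f x * θ x‖ ≤
            C * (⨍ x in cube c r, ‖f x‖) * (2 * r) ^ (d : ℝ) * t ^ η /
              max t ‖w - c‖ ^ ((d : ℝ) + η)) ∧
        -- (ii)
        (w ∉ cube c (3 * r) → (∫ x in cube c r, f x) = 0 →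
          ‖∫ x in cube c r, f x * θ x‖ ≤
            C * (⨍ x in cube c r, ‖f x‖) * (2 * r) ^ ((d : ℝ) + δ) * t ^ (η - δ) /
              max t ‖w - c‖ ^ ((d : ℝ) + η)) ∧
        -- (iii)
        (w ∈ cube c r →
          ∀ u ∈ cube c r, ∀ M : ℝ,
            (∀ (c' : Rd d) (r' : ℝ), 0 < r' → u ∈ ball c' r' →
              (⨍ x in ball c' r', ‖f x‖) ≤ M) →
            ‖∫ x in (cube c (3 * r))ᶜ, f x * θ x‖ ≤ C * (t / (2 * r)) ^ η * M) := by
  have hη : 0 < η := hδ.trans_le hηδ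
  set C₁ := (1 + √d / 2) ^ ((d : ℝ) + η)
  set C₂ := 2 * (1 + √d / 2) ^ ((d : ℝ) + η) * (√d / 2) ^ δ
  set C₃ := (1 + √d) ^ ((d : ℝ) + η) *
    (2 ^ d * volume.real (ball (0 : Rd d) 1) / (1 - 2 ^ (-η)))
  have hC₃ : 0 ≤ C₃ := mul_nonneg (by positivity) (div_nonneg (by positivity)
    (sub_nonneg.mpr (Real.rpow_le_one_of_one_le_of_nonpos one_le_two (by linarith))))
  refine ⟨C₁ + C₂ + C₃, by positivity, fun c r hr f hf w t ht θ hθ => ⟨fun hw => ?_,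
    fun hw hzero => ?_, fun hw u hu M hM => ?_⟩⟩
  · exact norm_setIntegral_cube_le (by linarith [show 0 ≤ C₂ by positivity]) hη.le ht hr.le hf
      hθ hw
  · exact norm_setIntegral_cube_le_of_integral_eq_zero (by linarith [show 0 ≤ C₁ by positivity])
      hη.le hδ ht hr hf hθ hw hzero
  · exact norm_setIntegral_compl_cube_le (by linarith [show 0 ≤ C₁ + C₂ by positivity]) hη ht hr
      hf hθ hw hu hM

/-- Localized wavelet coefficient estimates, Lemma 5.2. -/
theorem localized_wavelet_coefficient_estimates
    (d : ℕ) (hd : 1 ≤ d) (η δ : ℝ) (hδ : 0 < δ) (hηδ : δ ≤ η) :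
    ∃ C : ℝ, 0 < C ∧
      ∀ (c : Rd d) (r : ℝ), 0 < r →
      ∀ f : Rd d → ℂ, LocallyIntegrable f volume →
      ∀ (w : Rd d) (t : ℝ), 0 < t →
      ∀ θ : Rd d → ℂ, starBound ((d : ℝ) + η) δ 1 (SyInv w t θ) →
        -- (i)
        (w ∉ cube c (3 * r) →
          ‖∫ x in cube c r, f x * θ x‖ ≤
            C * (⨍ x in cube c r, ‖f x‖) * (2 * r) ^ (d : ℝ) * t ^ η /
              max t ‖w - c‖ ^ ((d : ℝ) + η)) ∧
        -- (ii)
        (w ∉ cube c (3 * r) → (∫ x in cube c r, f x) = 0 →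
          ‖∫ x in cube c r, f x * θ x‖ ≤
            C * (⨍ x in cube c r, ‖f x‖) * (2 * r) ^ ((d : ℝ) + δ) * t ^ (η - δ) /
              max t ‖w - c‖ ^ ((d : ℝ) + η)) ∧
        -- (iii)
        (w ∈ cube c r →
          ∀ u ∈ cube c r, ∀ M : ℝ,
            (∀ (c' : Rd d) (r' : ℝ), 0 < r' → u ∈ ball c' r' →
              (⨍ x in ball c' r', ‖f x‖) ≤ M) →
            ‖∫ x in (cube c (3 * r))ᶜ, f x * θ x‖ ≤ C * (t / (2 * r)) ^ η * M) :=
  localized_wavelet_coefficient_estimates_general d η δ hδ hηδ
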